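/- If a graph G has the same degree sequence as the balanced complete k-partite graph K_{a,...,a} (k parts each of size a) and ω(G) = k, then G is isomorphic to K_{a,...,a}. -/

import Mathlib

open SimpleGraph

open scoped Classical in
/-- The degree sequence (multiset of degrees) of a finite simple graph. -/
noncomputable def degSeq {V : Type*} [Fintype V] (G : SimpleGraph V) : Multiset ℕ :=
  Finset.univ.val.map fun v => G.degree v

/-- The independence number of a simple graph. -/
noncomputable def indepNum {V : Type*} (G : SimpleGraph V) : ℕ :=
  sSup {n | ∃ s : Finset V, s.card = n ∧ ∀ u ∈ s, ∀ v ∈ s, u ≠ v → ¬ G.Adj u v}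

/-- The disjoint union of cliques `K_{a 0} ∪ … ∪ K_{a (k-1)}`. -/
def cliqueUnion {k : ℕ} (a : Fin k → ℕ) : SimpleGraph (Σ i : Fin k, Fin (a i)) :=
  SimpleGraph.fromRel (fun u v => u.1 = v.1)

open scoped Classical in
lemma degSeq_sum {V : Type*} [Fintype V] (G : SimpleGraph V) :
    (degSeq G).sum = ∑ v, G.degree v := rfl

open scoped Classical in
lemma degSeq_card {V : Type*} [Fintype V] (G : SimpleGraph V) :
    Multiset.card (degSeq G) = Fintype.card V := by
  rw [degSeq, Multiset.card_map]
  rfl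

/-- The explicit equivalence between the balanced sigma type and `Fin (k * a)`
sending `⟨i, j⟩` to `i + k * j`, so that the first component is recovered as `mod k`. -/
def sigmaFinEquiv (k a : ℕ) (hk : 0 < k) : (Σ _ : Fin k, Fin a) ≃ Fin (k * a) where
  toFun x := ⟨x.1.1 + k * x.2.1, by
    have h1 := x.1.2
    have h2 := x.2.2
    calc x.1.1 + k * x.2.1 < k + k * x.2.1 := by omega
    _ = k * (x.2.1 + 1) := by ring
    _ ≤ k * a := Nat.mul_le_mul_left _ (by omega)⟩
  invFun m := ⟨⟨m.1 % k, Nat.mod_lt _ hk⟩, ⟨m.1 / k, by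
    have := m.2
    exact Nat.div_lt_of_lt_mul (by omega)⟩⟩
  left_inv := by
    rintro ⟨⟨i, hi⟩, ⟨j, hj⟩⟩
    have h1 : (i + k * j) % k = i := by
      rw [Nat.add_mul_mod_self_left, Nat.mod_eq_of_lt hi]
    have h2 : (i + k * j) / k = j := by
      rw [Nat.add_mul_div_left _ _ hk, Nat.div_eq_of_lt hi, Nat.zero_add]
    simp [h1, h2]
  right_inv := by
    rintro ⟨m, hm⟩
    simp [Nat.mod_add_div]

/-- The balanced complete multipartite graph is isomorphic to the Turán graph. -/
def balancedIsoTuran (k a : ℕ) (hk : 0 < k) :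
    (completeMultipartiteGraph fun _ : Fin k => Fin a) ≃g turanGraph (k * a) k where
  toEquiv := sigmaFinEquiv k a hk
  map_rel_iff' := by
    rintro ⟨⟨i, hi⟩, ⟨j, hj⟩⟩ ⟨⟨i', hi'⟩, ⟨j', hj'⟩⟩
    simp only [sigmaFinEquiv, turanGraph, Equiv.coe_fn_mk, comap_adj, top_adj]
    rw [Nat.add_mul_mod_self_left, Nat.add_mul_mod_self_left,
      Nat.mod_eq_of_lt hi, Nat.mod_eq_of_lt hi']
    simp [Ne, Fin.ext_iff]

theorem iso_of_cliqueNum_eq_balanced {k a : ℕ} (ha : 1 ≤ a)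
    {V : Type} [Fintype V] (G : SimpleGraph V)
    (hdeg : degSeq G = degSeq (completeMultipartiteGraph fun _ : Fin k => Fin a))
    (hclique : G.cliqueNum = k) :
    Nonempty (G ≃g completeMultipartiteGraph fun _ : Fin k => Fin a) := by
  classical
  set K := completeMultipartiteGraph fun _ : Fin k => Fin a with hK
  have hcardK : Fintype.card (Σ _ : Fin k, Fin a) = k * a := by simp
  have hcardV : Fintype.card V = k * a := by
    have := congrArg Multiset.card hdeg
    rwa [degSeq_card, degSeq_card, hcardK] at this
  rcases Nat.eq_zero_or_pos k with hk0 | hk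
  · -- both vertex types are empty
    subst hk0
    have hVempty : IsEmpty V := by
      rw [← Fintype.card_eq_zero_iff]; simpa using hcardV
    have hSempty : IsEmpty (Σ _ : Fin 0, Fin a) := by
      rw [← Fintype.card_eq_zero_iff]; simp
    exact ⟨{ toEquiv := Equiv.equivOfIsEmpty _ _,
             map_rel_iff' := fun {u v} => (hVempty.elim u) }⟩
  -- main case
  have hcf : G.CliqueFree (k + 1) := by
    intro s hs
    have h1 : s.card ≤ G.cliqueNum := hs.1.card_le_cliqueNum
    rw [hs.2, hclique] at h1
    omega
  -- edge counts are equal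
  have hsum : ∑ v, G.degree v = ∑ v, K.degree v := by
    have h := congrArg Multiset.sum hdeg
    rw [degSeq_sum, degSeq_sum] at h
    convert h using 1 <;> exact Finset.sum_congr rfl fun v _ => by congr!
  have hedges : G.edgeFinset.card = K.edgeFinset.card := by
    have h1 := G.sum_degrees_eq_twice_card_edges
    have h2 := K.sum_degrees_eq_twice_card_edges
    omega
  -- K is Turán-maximal
  have hKmax : K.IsTuranMaximal k := by
    have := isTuranMaximal_of_iso (balancedIsoTuran k a hk) hk
    convert this using 2 <;> simp
  -- transfer maximality through an equivalence of vertex types to get it on V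
  obtain ⟨φ⟩ : Nonempty (V ≃ (Σ _ : Fin k, Fin a)) := by
    rw [← Fintype.card_eq, hcardV, hcardK]
  have hTmax : (K.comap φ.toEmbedding).IsTuranMaximal k :=
    hKmax.iso (SimpleGraph.Iso.comap φ K).symm hk
  have hedgesT : (K.comap φ.toEmbedding).edgeFinset.card = K.edgeFinset.card :=
    (SimpleGraph.Iso.comap φ K).card_edgeFinset_eq
  have hGmax : G.IsTuranMaximal k := by
    refine ⟨hcf, fun H _ hH => ?_⟩
    calc H.edgeFinset.card ≤ (K.comap φ.toEmbedding).edgeFinset.card := hTmax.2 hH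
    _ = G.edgeFinset.card := by rw [hedgesT, hedges]
  obtain ⟨ψ⟩ := (isTuranMaximal_iff_nonempty_iso_turanGraph hk).mp hGmax
  -- adjust the cardinality in the Turán graph and compose
  have e1 : turanGraph (Fintype.card V) k ≃g turanGraph (k * a) k :=
    { toEquiv := finCongr hcardV
      map_rel_iff' := by intro u v; simp [turanGraph] }
  exact ⟨(balancedIsoTuran k a hk).symm.comp (e1.comp ψ)⟩
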